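/- arXiv:2209.05918 — 2 statements merged into one kernel-verified Lean document; each statement's English description precedes it below -/
import Mathlib

section
/- Consider the complex Riccati ODE a₂'(t) = −K a₂(t) − (1/2)[u₁ e^{−κt} + u₃ (1 − e^{−κt})/κ]² + (1/2) η² a₂(t)², with a₂(0) = i u₂, where κ, K, η > 0 and u₁, u₂, u₃ ∈ ℝ. Then this ODE has a unique global solution on ℝ≥0, the real part of a₂(t) is nonpositive for all t ≥ 0, and |Im(a₂(t))| ≤ |u₂| for all t ≥ 0. -/
/-!
The Riccati field is only locally Lipschitz, so we first solve the equation with the state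
projected onto the rectangle `[-M, 0] × [-|u₂|, |u₂|]`: that field is bounded and globally
Lipschitz, and gluing Picard–Lindelöf solutions on `[-n, n]` gives a global solution. On each side
of the rectangle the truncated field points inwards: where `Re z > 0` its real part is
`-g²/2 - η² (Im z)²/2 ≤ 0`, where `Re z < -M` it is at least `K M - A²/2 - η² u₂²/2 ≥ 0` for a bound
`A` of the forcing `g`, and `Im z` is pushed back by the factor `η² Re z - K < 0`. Hence the
truncation is never active and the solution solves the Riccati equation itself; uniqueness holds
because the Riccati field is Lipschitz on balls.
-/

open Complex Set Metric Topology
open scoped NNReal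

section ODE

variable {E : Type*} [NormedAddCommGroup E] [NormedSpace ℝ E]

theorem le_of_hasDerivAt_nonpos_of_lt {f f' : ℝ → ℝ} {a c : ℝ}
    (hf : ∀ t ≥ a, HasDerivAt f (f' t) t) (ha : f a ≤ c)
    (hf' : ∀ t ≥ a, c < f t → f' t ≤ 0) {t : ℝ} (ht : a ≤ t) : f t ≤ c := by
  refine le_of_forall_pos_le_add fun ε hε => ?_
  have hlen : 0 < t - a + 1 := by linarith
  set δ := ε / (t - a + 1)
  have hδ : 0 < δ := div_pos hε hlen
  -- `f` can only reach the rising barrier `c + δ (s - a + 1)` at points where `f > c`.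
  have hbarrier : ∀ s ∈ Icc a t, f s ≤ c + δ * (s - a + 1) := by
    refine image_le_of_deriv_right_lt_deriv_boundary' (B' := fun _ => δ)
      (fun s hs => (hf s hs.1).continuousAt.continuousWithinAt)
      (fun s hs => (hf s hs.1).hasDerivWithinAt) (by linarith) (by fun_prop)
      (fun s _ => ?_) (fun s hs hfs => (hf' s hs.1 ?_).trans_lt hδ)
    · simpa using (((hasDerivAt_id s).sub_const a).add_const 1).const_mul δ |>.const_add c
        |>.hasDerivWithinAt
    · rw [hfs]; nlinarith [hs.1]
  calc f t ≤ c + δ * (t - a + 1) := hbarrier t ⟨ht, le_rfl⟩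
    _ = c + ε := by rw [div_mul_cancel₀ ε hlen.ne']

theorem exists_forall_hasDerivAt_of_lipschitzWith [CompleteSpace E] {v : ℝ → E → E} {L : ℝ≥0}
    (hlip : ∀ t, LipschitzWith L (v t)) (hcont : ∀ x, Continuous (v · x))
    (hbdd : ∀ T, ∃ C, ∀ t ∈ Icc (-T) T, ∀ x, ‖v t x‖ ≤ C) (x₀ : E) :
    ∃ α : ℝ → E, α 0 = x₀ ∧ ∀ t, HasDerivAt α (v t (α t)) t := by
  have hlocal : ∀ n : ℕ, ∃ α : ℝ → E, α 0 = x₀ ∧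
      ∀ t ∈ Ioo (-n : ℝ) n, HasDerivAt α (v t (α t)) t := by
    intro n
    obtain ⟨C, hC⟩ := hbdd n
    have hC0 : 0 ≤ C := (norm_nonneg _).trans (hC 0 ⟨by simp, by simp⟩ x₀)
    have hpl : IsPicardLindelof v (tmin := -n) (tmax := n) ⟨0, by simp⟩ x₀
        ⟨C * n, by positivity⟩ 0 ⟨C, hC0⟩ L :=
      { lipschitzOnWith := fun t _ => (hlip t).lipschitzOnWith
        continuousOn := fun x _ => (hcont x).continuousOn
        norm_le := fun t ht x _ => hC t ht x
        mul_max_le := by simp; rfl }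
    obtain ⟨α, hα0, hα⟩ := hpl.exists_eq_forall_mem_Icc_hasDerivWithinAt₀
    exact ⟨α, hα0, fun t ht =>
      (hα t (Ioo_subset_Icc_self ht)).hasDerivAt (Icc_mem_nhds ht.1 ht.2)⟩
  choose α hα0 hα using hlocal
  have hagree : ∀ m n : ℕ, ∀ s : ℝ, |s| < m → |s| < n → α m s = α n s := by
    intro m n s hm hn
    set T := min (m : ℝ) n
    have hsT : |s| < T := lt_min hm hn
    have hTm : Ioo (-T) T ⊆ Ioo (-m : ℝ) m :=
      Ioo_subset_Ioo (neg_le_neg (min_le_left _ _)) (min_le_left _ _)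
    have hTn : Ioo (-T) T ⊆ Ioo (-n : ℝ) n :=
      Ioo_subset_Ioo (neg_le_neg (min_le_right _ _)) (min_le_right _ _)
    have hT : (0 : ℝ) ∈ Ioo (-T) T := ⟨by linarith [abs_nonneg s], by linarith [abs_nonneg s]⟩
    exact ODE_solution_unique_of_mem_Ioo (s := fun _ => univ)
      (fun t _ => (hlip t).lipschitzOnWith) hT (fun t ht => ⟨hα m t (hTm ht), trivial⟩)
      (fun t ht => ⟨hα n t (hTn ht), trivial⟩) (by rw [hα0, hα0]) (abs_lt.1 hsT)
  refine ⟨fun t => α (⌈|t|⌉₊ + 1) t, hα0 _, fun t => ?_⟩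
  have hceil : ∀ s : ℝ, |s| < (⌈|s|⌉₊ + 1 : ℕ) := fun s => by
    push_cast; linarith [Nat.le_ceil |s|]
  have heq : (fun s => α (⌈|s|⌉₊ + 1) s) =ᶠ[𝓝 t] α (⌈|t|⌉₊ + 1) := by
    filter_upwards [ball_mem_nhds t one_pos] with s hs
    rw [mem_ball, Real.dist_eq] at hs
    refine hagree _ _ s (hceil s) ?_
    have := abs_sub_abs_le_abs_sub s t
    push_cast; linarith [Nat.le_ceil |t|]
  exact (hα _ t (abs_lt.1 (hceil t))).congr_of_eventuallyEq heq

theorem ODE_solution_unique_Ici {v : ℝ → E → E}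
    (hv : ∀ ρ, ∃ L, ∀ t, LipschitzOnWith L (v t) (closedBall 0 ρ)) {f g : ℝ → E} {t₀ : ℝ}
    (hf : ∀ t ≥ t₀, HasDerivAt f (v t (f t)) t) (hg : ∀ t ≥ t₀, HasDerivAt g (v t (g t)) t)
    (heq : f t₀ = g t₀) : ∀ t ≥ t₀, f t = g t := by
  intro t ht
  have hfc : ContinuousOn f (Icc t₀ t) := fun s hs => (hf s hs.1).continuousAt.continuousWithinAt
  have hgc : ContinuousOn g (Icc t₀ t) := fun s hs => (hg s hs.1).continuousAt.continuousWithinAt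
  obtain ⟨ρf, hρf⟩ := isCompact_Icc.exists_bound_of_continuousOn hfc
  obtain ⟨ρg, hρg⟩ := isCompact_Icc.exists_bound_of_continuousOn hgc
  obtain ⟨L, hL⟩ := hv (max ρf ρg)
  exact ODE_solution_unique_of_mem_Icc_right (s := fun _ => closedBall 0 (max ρf ρg))
    (fun s _ => hL s) hfc (fun s hs => (hf s hs.1).hasDerivWithinAt)
    (fun s hs => mem_closedBall_zero_iff.2 ((hρf s (Ico_subset_Icc_self hs)).trans
      (le_max_left _ _)))
    hgc (fun s hs => (hg s hs.1).hasDerivWithinAt)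
    (fun s hs => mem_closedBall_zero_iff.2 ((hρg s (Ico_subset_Icc_self hs)).trans
      (le_max_right _ _)))
    heq ⟨ht, le_rfl⟩

end ODE

theorem HasDerivAt.re {a : ℝ → ℂ} {d : ℂ} {t : ℝ} (h : HasDerivAt a d t) :
    HasDerivAt (fun s => (a s).re) d.re t :=
  reCLM.hasFDerivAt.comp_hasDerivAt t h

theorem HasDerivAt.im {a : ℝ → ℂ} {d : ℂ} {t : ℝ} (h : HasDerivAt a d t) :
    HasDerivAt (fun s => (a s).im) d.im t :=
  imCLM.hasFDerivAt.comp_hasDerivAt t h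

section ProjReProdIm

variable {a b c d : ℝ} (hab : a ≤ b) (hcd : c ≤ d)

noncomputable def projReProdIm (z : ℂ) : ℂ := ⟨projIcc a b hab z.re, projIcc c d hcd z.im⟩

@[simp]
theorem projReProdIm_re (z : ℂ) : (projReProdIm hab hcd z).re = projIcc a b hab z.re := rfl

@[simp]
theorem projReProdIm_im (z : ℂ) : (projReProdIm hab hcd z).im = projIcc c d hcd z.im := rfl

theorem projReProdIm_mem (z : ℂ) : projReProdIm hab hcd z ∈ Icc a b ×ℂ Icc c d :=
  ⟨(projIcc a b hab z.re).2, (projIcc c d hcd z.im).2⟩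

theorem projReProdIm_of_mem {z : ℂ} (hz : z ∈ Icc a b ×ℂ Icc c d) : projReProdIm hab hcd z = z :=
  Complex.ext (by simp [projIcc_of_mem hab hz.1]) (by simp [projIcc_of_mem hcd hz.2])

theorem lipschitzWith_projReProdIm : LipschitzWith 1 (projReProdIm hab hcd) := by
  refine LipschitzWith.of_dist_le_mul fun z w => ?_
  rw [NNReal.coe_one, one_mul, dist_eq_re_im, dist_eq_re_im]
  have hsq : ∀ (p q : ℝ) (hpq : p ≤ q) (x y : ℝ),
      ((projIcc p q hpq x : ℝ) - projIcc p q hpq y) ^ 2 ≤ (x - y) ^ 2 :=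
    fun p q hpq x y => sq_le_sq.2 (by simpa using abs_projIcc_sub_projIcc hpq)
  exact Real.sqrt_le_sqrt (add_le_add (hsq a b hab _ _) (hsq c d hcd _ _))

end ProjReProdIm

section Riccati

variable {K η : ℝ} {g : ℝ → ℝ}

noncomputable def riccatiField (K η : ℝ) (g : ℝ → ℝ) (t : ℝ) (z : ℂ) : ℂ :=
  -(K : ℂ) * z - (1 / 2) * ((g t : ℝ) : ℂ) ^ 2 + (1 / 2) * (η : ℂ) ^ 2 * z ^ 2

theorem riccatiField_re (t : ℝ) (z : ℂ) :
    (riccatiField K η g t z).re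
      = -K * z.re - g t ^ 2 / 2 + η ^ 2 / 2 * (z.re ^ 2 - z.im ^ 2) := by
  simp [riccatiField, sq]
  ring

theorem riccatiField_im (t : ℝ) (z : ℂ) :
    (riccatiField K η g t z).im = z.im * (η ^ 2 * z.re - K) := by
  simp [riccatiField, sq]
  ring

theorem continuous_riccatiField_uncurry (hg : Continuous g) :
    Continuous (fun p : ℝ × ℂ => riccatiField K η g p.1 p.2) := by
  unfold riccatiField
  fun_prop

theorem lipschitzOnWith_riccatiField (t ρ : ℝ) :
    LipschitzOnWith (|K| + η ^ 2 * ρ).toNNReal (riccatiField K η g t) (closedBall 0 ρ) := by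
  refine LipschitzOnWith.of_dist_le_mul fun z hz w hw => ?_
  rw [mem_closedBall_zero_iff] at hz hw
  have hρ : 0 ≤ ρ := (norm_nonneg z).trans hz
  have hsub : riccatiField K η g t z - riccatiField K η g t w
      = (z - w) * ((η : ℂ) ^ 2 / 2 * (z + w) - K) := by
    unfold riccatiField; ring
  have hfactor : ‖(η : ℂ) ^ 2 / 2 * (z + w) - K‖ ≤ |K| + η ^ 2 * ρ :=
    calc ‖(η : ℂ) ^ 2 / 2 * (z + w) - K‖ ≤ η ^ 2 / 2 * (‖z‖ + ‖w‖) + |K| := by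
          refine (norm_sub_le _ _).trans (add_le_add ?_ (by simp))
          simpa using mul_le_mul_of_nonneg_left (norm_add_le z w) (by positivity : 0 ≤ η ^ 2 / 2)
      _ ≤ |K| + η ^ 2 * ρ := by nlinarith [sq_nonneg η]
  rw [dist_eq_norm, dist_eq_norm, hsub, norm_mul, Real.coe_toNNReal _ (by positivity), mul_comm]
  exact mul_le_mul_of_nonneg_right hfactor (norm_nonneg _)

theorem exists_forall_hasDerivAt_riccatiField_projReProdIm {a b c d : ℝ} (hab : a ≤ b)
    (hcd : c ≤ d) (hg : Continuous g) (z₀ : ℂ) :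
    ∃ α : ℝ → ℂ, α 0 = z₀ ∧
      ∀ t, HasDerivAt α (riccatiField K η g t (projReProdIm hab hcd (α t))) t := by
  have hbox : IsCompact (Icc a b ×ℂ Icc c d) := isCompact_Icc.reProdIm isCompact_Icc
  obtain ⟨ρ, hρ⟩ := hbox.isBounded.subset_closedBall 0
  refine exists_forall_hasDerivAt_of_lipschitzWith
    (v := fun t z => riccatiField K η g t (projReProdIm hab hcd z))
    (L := (|K| + η ^ 2 * ρ).toNNReal * 1)
    (fun t => lipschitzOnWith_univ.1 ?_) (fun z => ?_) (fun T => ?_) z₀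
  · exact (lipschitzOnWith_riccatiField t ρ).comp
      (lipschitzWith_projReProdIm hab hcd).lipschitzOnWith
      fun z _ => hρ (projReProdIm_mem hab hcd z)
  · exact (continuous_riccatiField_uncurry hg).comp (Continuous.prodMk_left _)
  · obtain ⟨C, hC⟩ := (isCompact_Icc.prod hbox).exists_bound_of_continuousOn
      (continuous_riccatiField_uncurry (K := K) (η := η) hg).continuousOn
    exact ⟨C, fun t ht z => hC (t, _) ⟨ht, projReProdIm_mem hab hcd z⟩⟩

theorem mem_reProdIm_of_hasDerivAt_riccatiField_projReProdIm {A M N : ℝ} (hK : 0 ≤ K)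
    (hM : -M ≤ 0) (hN : -N ≤ N) (hgA : ∀ t ≥ 0, |g t| ≤ A)
    (hMA : A ^ 2 + η ^ 2 * N ^ 2 ≤ 2 * K * M) {α : ℝ → ℂ}
    (h0 : α 0 ∈ Icc (-M) 0 ×ℂ Icc (-N) N)
    (hα : ∀ t ≥ 0, HasDerivAt α (riccatiField K η g t (projReProdIm hM hN (α t))) t) :
    ∀ t ≥ 0, α t ∈ Icc (-M) 0 ×ℂ Icc (-N) N := by
  intro t ht
  set p := fun s => projReProdIm hM hN (α s)
  have hre : ∀ s ≥ 0, HasDerivAt (fun s => (α s).re) (riccatiField K η g s (p s)).re s :=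
    fun s hs => (hα s hs).re
  have him : ∀ s ≥ 0, HasDerivAt (fun s => (α s).im) (riccatiField K η g s (p s)).im s :=
    fun s hs => (hα s hs).im
  have hpre : ∀ s, (p s).re ∈ Icc (-M) 0 := fun s => (projReProdIm_mem hM hN (α s)).1
  have hpim : ∀ s, (p s).im ∈ Icc (-N) N := fun s => (projReProdIm_mem hM hN (α s)).2
  have hηre : ∀ s, η ^ 2 * (p s).re ≤ 0 :=
    fun s => mul_nonpos_of_nonneg_of_nonpos (sq_nonneg η) (hpre s).2
  have hN0 : 0 ≤ N := by linarith
  refine ⟨⟨?_, ?_⟩, ?_, ?_⟩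
  · have := le_of_hasDerivAt_nonpos_of_lt (f := fun s => -(α s).re) (c := M)
      (fun s hs => (hre s hs).neg) (by linarith [h0.1.1]) (fun s hs hlt => ?_) ht
    · linarith
    have hp : (p s).re = -M := by simp [p, projIcc_of_le_left hM (by linarith : (α s).re ≤ -M)]
    have hg2 : g s ^ 2 ≤ A ^ 2 := sq_le_sq.2 ((hgA s hs).trans (le_abs_self A))
    have hi2 : η ^ 2 * (p s).im ^ 2 ≤ η ^ 2 * N ^ 2 :=
      mul_le_mul_of_nonneg_left (sq_le_sq' (hpim s).1 (hpim s).2) (sq_nonneg η)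
    rw [riccatiField_re, hp]
    nlinarith [sq_nonneg (η * M)]
  · refine le_of_hasDerivAt_nonpos_of_lt hre h0.1.2 (fun s hs hlt => ?_) ht
    have hp : (p s).re = 0 := by simp [p, projIcc_of_right_le hM hlt.le]
    rw [riccatiField_re, hp]
    nlinarith [sq_nonneg (g s), sq_nonneg (η * (p s).im)]
  · have := le_of_hasDerivAt_nonpos_of_lt (f := fun s => -(α s).im) (c := N)
      (fun s hs => (him s hs).neg) (by linarith [h0.2.1]) (fun s hs hlt => ?_) ht
    · linarith
    have hp : (p s).im = -N := by simp [p, projIcc_of_le_left hN (by linarith : (α s).im ≤ -N)]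
    rw [riccatiField_im, hp]
    nlinarith [mul_nonpos_of_nonneg_of_nonpos hN0
      (by linarith [hηre s] : η ^ 2 * (p s).re - K ≤ 0)]
  · refine le_of_hasDerivAt_nonpos_of_lt him h0.2.2 (fun s hs hlt => ?_) ht
    have hp : (p s).im = N := by simp [p, projIcc_of_right_le hN hlt.le]
    rw [riccatiField_im, hp]
    exact mul_nonpos_of_nonneg_of_nonpos hN0 (by linarith [hηre s])

theorem exists_riccatiField_solution {A : ℝ} (hK : 0 < K) (hg : Continuous g)
    (hgA : ∀ t ≥ 0, |g t| ≤ A) (u₂ : ℝ) :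
    ∃ α : ℝ → ℂ, α 0 = I * u₂ ∧ ∀ t ≥ 0,
      HasDerivAt α (riccatiField K η g t (α t)) t ∧ (α t).re ≤ 0 ∧ |(α t).im| ≤ |u₂| := by
  set M := (A ^ 2 + η ^ 2 * u₂ ^ 2) / (2 * K)
  have hM : -M ≤ 0 := neg_nonpos.2 (by positivity)
  have hN : -|u₂| ≤ |u₂| := neg_le_self (abs_nonneg u₂)
  have hMA : A ^ 2 + η ^ 2 * |u₂| ^ 2 ≤ 2 * K * M := by
    rw [sq_abs, mul_div_cancel₀ _ (by positivity)]
  have h0 : I * u₂ ∈ Icc (-M) 0 ×ℂ Icc (-|u₂|) |u₂| :=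
    ⟨by simpa using hM, by simpa using abs_le.1 le_rfl⟩
  obtain ⟨α, hα0, hα⟩ :=
    exists_forall_hasDerivAt_riccatiField_projReProdIm (K := K) (η := η) hM hN hg (I * u₂)
  have hbox := mem_reProdIm_of_hasDerivAt_riccatiField_projReProdIm hK.le hM hN hgA hMA
    (hα0 ▸ h0) fun t _ => hα t
  refine ⟨α, hα0, fun t ht => ⟨?_, (hbox t ht).1.2, abs_le.2 (hbox t ht).2⟩⟩
  simpa only [projReProdIm_of_mem hM hN (hbox t ht)] using hα t

end Riccati

theorem abs_exp_interpolation_le {κ t : ℝ} (hκ : 0 < κ) (ht : 0 ≤ t) (u₁ u₃ : ℝ) :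
    |u₁ * Real.exp (-κ * t) + u₃ * (1 - Real.exp (-κ * t)) / κ| ≤ |u₁| + |u₃| / κ := by
  have he₀ : 0 < Real.exp (-κ * t) := Real.exp_pos _
  have he₁ : Real.exp (-κ * t) ≤ 1 := Real.exp_le_one_iff.2 (by nlinarith)
  calc |u₁ * Real.exp (-κ * t) + u₃ * (1 - Real.exp (-κ * t)) / κ|
      ≤ |u₁| * Real.exp (-κ * t) + |u₃| / κ * (1 - Real.exp (-κ * t)) := by
        rw [mul_div_right_comm]
        refine (abs_add_le _ _).trans_eq ?_
        rw [abs_mul, abs_mul, abs_div, abs_of_pos he₀, abs_of_pos hκ,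
          abs_of_nonneg (sub_nonneg.2 he₁)]
    _ ≤ |u₁| + |u₃| / κ := by nlinarith [abs_nonneg u₁, div_nonneg (abs_nonneg u₃) hκ.le]

theorem riccati_global_solution_general (κ K η u₁ u₂ u₃ : ℝ)
    (hκ : 0 < κ) (hK : 0 < K) :
    ∃ a₂ : ℝ → ℂ,
      (a₂ 0 = Complex.I * (u₂ : ℂ) ∧
        ∀ t : ℝ, 0 ≤ t → HasDerivAt a₂
          (-(K : ℂ) * a₂ t
            - (1 / 2) * ((((u₁ * Real.exp (-κ * t) + u₃ * (1 - Real.exp (-κ * t)) / κ) : ℝ) : ℂ)) ^ 2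
            + (1 / 2) * (η : ℂ) ^ 2 * (a₂ t) ^ 2) t)
      ∧ (∀ b : ℝ → ℂ,
          (b 0 = Complex.I * (u₂ : ℂ) ∧
            ∀ t : ℝ, 0 ≤ t → HasDerivAt b
              (-(K : ℂ) * b t
                - (1 / 2) * ((((u₁ * Real.exp (-κ * t) + u₃ * (1 - Real.exp (-κ * t)) / κ) : ℝ) : ℂ)) ^ 2
                + (1 / 2) * (η : ℂ) ^ 2 * (b t) ^ 2) t) →
          ∀ t : ℝ, 0 ≤ t → b t = a₂ t)
      ∧ (∀ t : ℝ, 0 ≤ t → (a₂ t).re ≤ 0 ∧ |(a₂ t).im| ≤ |u₂|) := by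
  let g : ℝ → ℝ := fun t => u₁ * Real.exp (-κ * t) + u₃ * (1 - Real.exp (-κ * t)) / κ
  obtain ⟨a, ha0, ha⟩ := exists_riccatiField_solution (η := η) (g := g) hK (by fun_prop)
    (fun t ht => abs_exp_interpolation_le hκ ht u₁ u₃) u₂
  refine ⟨a, ⟨ha0, fun t ht => (ha t ht).1⟩, fun b hb => ?_, fun t ht => (ha t ht).2⟩
  exact ODE_solution_unique_Ici (v := riccatiField K η g)
    (fun ρ => ⟨_, fun s => lipschitzOnWith_riccatiField s ρ⟩) hb.2 (fun s hs => (ha s hs).1)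
    (hb.1.trans ha0.symm)

/-- The complex Riccati ODE
`a₂' = −K a₂ − ½ [u₁ e^{−κt} + u₃ (1−e^{−κt})/κ]² + ½ η² a₂²`, `a₂(0) = i u₂`,
has a unique global solution on `ℝ≥0`; its real part stays nonpositive and its imaginary
part is bounded by `|u₂|`. -/
theorem riccati_global_solution (κ K η u₁ u₂ u₃ : ℝ)
    (hκ : 0 < κ) (hK : 0 < K) (hη : 0 < η) :
    ∃ a₂ : ℝ → ℂ,
      (a₂ 0 = Complex.I * (u₂ : ℂ) ∧
        ∀ t : ℝ, 0 ≤ t → HasDerivAt a₂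
          (-(K : ℂ) * a₂ t
            - (1 / 2) * ((((u₁ * Real.exp (-κ * t) + u₃ * (1 - Real.exp (-κ * t)) / κ) : ℝ) : ℂ)) ^ 2
            + (1 / 2) * (η : ℂ) ^ 2 * (a₂ t) ^ 2) t)
      ∧ (∀ b : ℝ → ℂ,
          (b 0 = Complex.I * (u₂ : ℂ) ∧
            ∀ t : ℝ, 0 ≤ t → HasDerivAt b
              (-(K : ℂ) * b t
                - (1 / 2) * ((((u₁ * Real.exp (-κ * t) + u₃ * (1 - Real.exp (-κ * t)) / κ) : ℝ) : ℂ)) ^ 2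
                + (1 / 2) * (η : ℂ) ^ 2 * (b t) ^ 2) t) →
          ∀ t : ℝ, 0 ≤ t → b t = a₂ t)
      ∧ (∀ t : ℝ, 0 ≤ t → (a₂ t).re ≤ 0 ∧ |(a₂ t).im| ≤ |u₂|) :=
  riccati_global_solution_general κ K η u₁ u₂ u₃ hκ hK
end

section
/- Let ζ satisfy dζ_t = −K(ζ_t − σ²(t))dt + η√ζ_t dW_t with K, η > 0 and σ²(t) = γ₀ + Σ_{k=1}^{m} γ_k sin(ξ_k t) + Σ_{k=1}^{m} δ_k cos(ξ_k t) nonnegative. Then E[ζ_{t+Δ} | F_t] = θ₀ + φ₀ ζ_t + Σ_k θ_k sin(ξ_k t) + Σ_k φ_k cos(ξ_k t), where θ₀ = γ₀(1 − e^{−KΔ}), φ₀ = e^{−KΔ}, θ_k = γ_k K (K[cos(ξ_kΔ) − e^{−KΔ}] + ξ_k sin(ξ_kΔ))/(K² + ξ_k²) − δ_k K (K sin(ξ_kΔ) − ξ_k(cos(ξ_kΔ) − e^{−KΔ}))/(K² + ξ_k²), φ_k = γ_k K (K sin(ξ_kΔ) − ξ_k(cos(ξ_kΔ) − e^{−KΔ}))/(K²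 + ξ_k²) + δ_k K (K[cos(ξ_kΔ) − e^{−KΔ}] + ξ_k sin(ξ_kΔ))/(K² + ξ_k²). -/
open MeasureTheory ProbabilityTheory Real Filter

/-!
Along each path, `y = ζ - η B` is C¹ with `y' = -K y + K (σ² - η B)`, so variation of constants
gives `ζ_{t+Δ} = e^{-KΔ} ζ_t + K ∫_t^{t+Δ} e^{-K(t+Δ-u)} σ²(u) du + η ∫_t^{t+Δ} e^{-K(t+Δ-u)} dB_u`,
the last integral being defined pathwise by integration by parts. Conditionally on `F_t`, Fubini
and the martingale property replace every `B_u` in it by `B_t`, after which it vanishes because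
`K ∫_t^{t+Δ} e^{-K(t+Δ-u)} du = 1 - e^{-KΔ}`. The deterministic integral is evaluated with the
antiderivative of `e^{Ku} (p sin ξu + q cos ξu)`.
-/

/-- `∫_t^T e^{-K(T-u)} db_u`, written through integration by parts. -/
noncomputable def dampedIntegral (K t T : ℝ) (b : ℝ → ℝ) : ℝ :=
  b T - exp (-K * (T - t)) * b t - K * ∫ u in t..T, exp (-K * (T - u)) * b u

theorem eq_exp_mul_add_integral_of_hasDerivAt {y g : ℝ → ℝ} {K : ℝ} (hg : Continuous g)
    (hy : ∀ s, HasDerivAt y (-K * y s + g s) s) (a b : ℝ) :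
    y b = exp (-K * (b - a)) * y a + ∫ u in a..b, exp (-K * (b - u)) * g u := by
  have hkernel : ∀ s, HasDerivAt (fun s => exp (-K * (b - s)) * y s)
      (exp (-K * (b - s)) * g s) s := by
    intro s
    have he := ((hasDerivAt_id' (x := s)).const_sub b |>.const_mul (-K)).exp
    exact (he.fun_mul (hy s)).congr_deriv (by ring)
  have hint : Continuous fun u => exp (-K * (b - u)) * g u := by fun_prop
  rw [intervalIntegral.integral_eq_sub_of_hasDerivAt (fun s _ => hkernel s)
    (hint.intervalIntegrable a b)]
  simp

theorem mul_integral_exp_neg_mul_sub (K a b : ℝ) :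
    K * ∫ u in a..b, exp (-K * (b - u)) = 1 - exp (-K * (b - a)) := by
  have hderiv : ∀ s, HasDerivAt (fun s => exp (-K * (b - s)))
      (K * exp (-K * (b - s))) s := by
    intro s
    convert ((hasDerivAt_id' (x := s)).const_sub b |>.const_mul (-K)).exp using 1
    ring
  have hint : Continuous fun s => K * exp (-K * (b - s)) := by fun_prop
  rw [← intervalIntegral.integral_const_mul, intervalIntegral.integral_eq_sub_of_hasDerivAt
    (fun s _ => hderiv s) (hint.intervalIntegrable a b)]
  simp

theorem eq_exp_mul_add_integral_of_integral_eq {K η z₀ : ℝ} {z f b : ℝ → ℝ} (hz : Continuous z)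
    (hf : Continuous f) (hb : Continuous b)
    (h : ∀ s, z s = z₀ - K * (∫ u in (0 : ℝ)..s, (z u - f u)) + η * b s) (t T : ℝ) :
    z T = exp (-K * (T - t)) * z t + K * (∫ u in t..T, exp (-K * (T - u)) * f u)
      + η * dampedIntegral K t T b := by
  have hderiv : ∀ s, HasDerivAt (fun s => z s - η * b s)
      (-K * (z s - η * b s) + K * (f s - η * b s)) s := by
    intro s
    have hprim := (((hz.sub hf).integral_hasStrictDerivAt 0 s).hasDerivAt.const_mul K).const_sub z₀
    have hfun : (fun s => z s - η * b s) = fun s => z₀ - K * ∫ u in (0 : ℝ)..s, (z u - f u) :=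
      funext fun s => by rw [h s]; ring
    rw [hfun]
    exact hprim.congr_deriv (by simp only [Pi.sub_apply]; ring)
  have hvoc := eq_exp_mul_add_integral_of_hasDerivAt
    (by fun_prop : Continuous fun s => K * (f s - η * b s)) hderiv t T
  have hsplit : ∫ u in t..T, exp (-K * (T - u)) * (K * (f u - η * b u)) =
      K * (∫ u in t..T, exp (-K * (T - u)) * f u)
        - η * K * ∫ u in t..T, exp (-K * (T - u)) * b u := by
    rw [← intervalIntegral.integral_const_mul, ← intervalIntegral.integral_const_mul,
      ← intervalIntegral.integral_sub (Continuous.intervalIntegrable (by fun_prop) _ _)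
        (Continuous.intervalIntegrable (by fun_prop) _ _)]
    congr 1
    funext u
    ring
  rw [dampedIntegral]
  linear_combination hvoc + hsplit

-- The two coefficients are the real and imaginary parts of `K (e^{iξΔ} - e^{-KΔ}) / (K + iξ)`.
theorem mul_integral_exp_neg_mul_sub_mul_sin_add_cos {K ξ : ℝ} (hK : K ≠ 0) (p q t Δ : ℝ) :
    K * ∫ u in t..t + Δ, exp (-K * (t + Δ - u)) * (p * sin (ξ * u) + q * cos (ξ * u)) =
      (p * K * ((K * (cos (ξ * Δ) - exp (-K * Δ)) + ξ * sin (ξ * Δ)) / (K ^ 2 + ξ ^ 2))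
        - q * K * ((K * sin (ξ * Δ) - ξ * (cos (ξ * Δ) - exp (-K * Δ))) / (K ^ 2 + ξ ^ 2)))
          * sin (ξ * t)
      + (p * K * ((K * sin (ξ * Δ) - ξ * (cos (ξ * Δ) - exp (-K * Δ))) / (K ^ 2 + ξ ^ 2))
        + q * K * ((K * (cos (ξ * Δ) - exp (-K * Δ)) + ξ * sin (ξ * Δ)) / (K ^ 2 + ξ ^ 2)))
          * cos (ξ * t) := by
  have hD : K ^ 2 + ξ ^ 2 ≠ 0 := by positivity
  have hderiv : ∀ s, HasDerivAt
      (fun s => K * exp (-K * (t + Δ - s)) *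
        ((p * K + q * ξ) * sin (ξ * s) + (q * K - p * ξ) * cos (ξ * s)) / (K ^ 2 + ξ ^ 2))
      (K * (exp (-K * (t + Δ - s)) * (p * sin (ξ * s) + q * cos (ξ * s)))) s := by
    intro s
    have he := ((hasDerivAt_id' (x := s)).const_sub (t + Δ) |>.const_mul (-K)).exp
    have hs := ((hasDerivAt_id' (x := s)).const_mul ξ).sin
    have hc := ((hasDerivAt_id' (x := s)).const_mul ξ).cos
    refine (((he.const_mul K).fun_mul ((hs.const_mul (p * K + q * ξ)).fun_add
      (hc.const_mul (q * K - p * ξ)))).div_const (K ^ 2 + ξ ^ 2)).congr_deriv ?_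
    field_simp
    ring
  have hint : Continuous fun s =>
      K * (exp (-K * (t + Δ - s)) * (p * sin (ξ * s) + q * cos (ξ * s))) := by
    fun_prop
  rw [← intervalIntegral.integral_const_mul, intervalIntegral.integral_eq_sub_of_hasDerivAt
    (fun s _ => hderiv s) (hint.intervalIntegrable _ _)]
  simp only [sub_self, mul_zero, exp_zero, add_sub_cancel_left, mul_add, sin_add, cos_add]
  field_simp
  ring

theorem mul_integral_exp_neg_mul_sub_mul_trigPoly {ι : Type*} (S : Finset ι) {K : ℝ}
    (hK : K ≠ 0) (γ₀ t Δ : ℝ) (γ δ ξ : ι → ℝ) :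
    K * ∫ u in t..t + Δ, exp (-K * (t + Δ - u)) *
        (γ₀ + (∑ k ∈ S, γ k * sin (ξ k * u)) + (∑ k ∈ S, δ k * cos (ξ k * u))) =
      γ₀ * (1 - exp (-K * Δ))
      + (∑ k ∈ S,
          (γ k * K * ((K * (cos (ξ k * Δ) - exp (-K * Δ)) + ξ k * sin (ξ k * Δ))
              / (K ^ 2 + ξ k ^ 2))
           - δ k * K * ((K * sin (ξ k * Δ) - ξ k * (cos (ξ k * Δ) - exp (-K * Δ)))
              / (K ^ 2 + ξ k ^ 2))) * sin (ξ k * t))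
      + (∑ k ∈ S,
          (γ k * K * ((K * sin (ξ k * Δ) - ξ k * (cos (ξ k * Δ) - exp (-K * Δ)))
              / (K ^ 2 + ξ k ^ 2))
           + δ k * K * ((K * (cos (ξ k * Δ) - exp (-K * Δ)) + ξ k * sin (ξ k * Δ))
              / (K ^ 2 + ξ k ^ 2))) * cos (ξ k * t)) := by
  have hsplit : ∀ u, exp (-K * (t + Δ - u)) *
      (γ₀ + (∑ k ∈ S, γ k * sin (ξ k * u)) + (∑ k ∈ S, δ k * cos (ξ k * u))) =
      γ₀ * exp (-K * (t + Δ - u)) + ∑ k ∈ S,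
        exp (-K * (t + Δ - u)) * (γ k * sin (ξ k * u) + δ k * cos (ξ k * u)) := by
    intro u
    rw [add_assoc, ← Finset.sum_add_distrib, mul_add, Finset.mul_sum, mul_comm]
  simp_rw [hsplit]
  rw [intervalIntegral.integral_add (Continuous.intervalIntegrable (by fun_prop) _ _)
      (Continuous.intervalIntegrable (by fun_prop) _ _),
    intervalIntegral.integral_finsetSum
      fun k _ => Continuous.intervalIntegrable (by fun_prop) _ _,
    intervalIntegral.integral_const_mul, mul_add, mul_left_comm, mul_integral_exp_neg_mul_sub,
    Finset.mul_sum, add_sub_cancel_left, add_assoc, ← Finset.sum_add_distrib]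
  congr 1
  refine Finset.sum_congr rfl fun k _ => ?_
  rw [mul_integral_exp_neg_mul_sub_mul_sin_add_cos hK]

namespace MeasureTheory

variable {Ω : Type*} {m0 : MeasurableSpace Ω} {μ : Measure Ω} {ℱ : Filtration ℝ m0}
  {B : ℝ → Ω → ℝ}

theorem Martingale.integral_abs_le (hB : Martingale B ℱ μ) {u T : ℝ} (huT : u ≤ T) :
    ∫ ω, |B u ω| ∂μ ≤ ∫ ω, |B T ω| ∂μ :=
  calc ∫ ω, |B u ω| ∂μ = ∫ ω, |μ[B T | ℱ u] ω| ∂μ :=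
        integral_congr_ae ((hB.condExp_ae_eq huT).mono fun ω h => by simp only [h])
    _ ≤ ∫ ω, |B T ω| ∂μ := integral_abs_condExp_le _

variable [IsFiniteMeasure μ]

theorem Martingale.integrable_prod_mul (hB : Martingale B ℱ μ)
    (hB_cont : ∀ ω, Continuous (B · ω)) {w : ℝ → ℝ} (hw : Continuous w) (t T : ℝ) :
    Integrable (fun p : ℝ × Ω => w p.1 * B p.1 p.2) ((volume.restrict (Set.Ioc t T)).prod μ) := by
  obtain ⟨C, hC⟩ :=
    isCompact_Icc.exists_bound_of_continuousOn (hw.continuousOn (s := Set.Icc t T))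
  have hmeas : StronglyMeasurable fun p : ℝ × Ω => w p.1 * B p.1 p.2 :=
    (hw.stronglyMeasurable.comp_measurable measurable_fst).mul
      (stronglyMeasurable_uncurry_of_continuous_of_stronglyMeasurable hB_cont
        fun u => (hB.stronglyAdapted u).mono (ℱ.le u))
  rw [integrable_prod_iff hmeas.aestronglyMeasurable]
  refine ⟨ae_of_all _ fun u => (hB.integrable u).const_mul (w u), ?_⟩
  refine Integrable.mono' (integrableOn_const (C := C * ∫ ω, |B T ω| ∂μ) measure_Ioc_lt_top.ne)
    hmeas.aestronglyMeasurable.norm.integral_prod_right' ?_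
  filter_upwards [ae_restrict_mem measurableSet_Ioc] with u hu
  have hCu := hC u (Set.Ioc_subset_Icc_self hu)
  calc ‖∫ ω, ‖w u * B u ω‖ ∂μ‖ = ‖w u‖ * ∫ ω, |B u ω| ∂μ := by
        simp only [norm_mul, Real.norm_eq_abs, integral_const_mul, abs_abs,
          abs_of_nonneg (integral_nonneg fun _ => abs_nonneg _)]
    _ ≤ C * ∫ ω, |B T ω| ∂μ :=
        mul_le_mul hCu (hB.integral_abs_le hu.2) (integral_nonneg fun _ => abs_nonneg _)
          ((norm_nonneg _).trans hCu)

theorem Martingale.integrable_intervalIntegral_mul (hB : Martingale B ℱ μ)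
    (hB_cont : ∀ ω, Continuous (B · ω)) {w : ℝ → ℝ} (hw : Continuous w) {t T : ℝ} (htT : t ≤ T) :
    Integrable (fun ω => ∫ u in t..T, w u * B u ω) μ := by
  simp_rw [intervalIntegral.integral_of_le htT]
  exact (hB.integrable_prod_mul hB_cont hw t T).integral_prod_right

theorem Martingale.condExp_intervalIntegral_mul (hB : Martingale B ℱ μ)
    (hB_cont : ∀ ω, Continuous (B · ω)) {w : ℝ → ℝ} (hw : Continuous w) {t T : ℝ} (htT : t ≤ T) :
    μ[fun ω => ∫ u in t..T, w u * B u ω | ℱ t] =ᵐ[μ] fun ω => (∫ u in t..T, w u) * B t ω := by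
  refine (ae_eq_condExp_of_forall_setIntegral_eq (ℱ.le t)
    (hB.integrable_intervalIntegral_mul hB_cont hw htT)
    (fun s _ _ => ((hB.integrable t).const_mul _).integrableOn) (fun s hs _ => ?_)
    ((hB.stronglyAdapted t).const_mul _).aestronglyMeasurable).symm
  have hprod : Integrable (Function.uncurry fun u ω => w u * B u ω)
      ((volume.restrict (Set.Ioc t T)).prod (μ.restrict s)) := by
    have := (hB.integrable_prod_mul hB_cont hw t T).restrict (s := Set.univ ×ˢ s)
    rwa [← Measure.prod_restrict, Measure.restrict_univ] at this
  calc ∫ ω in s, (∫ u in t..T, w u) * B t ω ∂μ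
      = ∫ u in Set.Ioc t T, w u * ∫ ω in s, B t ω ∂μ := by
        rw [integral_const_mul, intervalIntegral.integral_of_le htT, integral_mul_const]
    _ = ∫ u in Set.Ioc t T, ∫ ω in s, w u * B u ω ∂μ := by
        refine setIntegral_congr_fun measurableSet_Ioc fun u hu => ?_
        rw [integral_const_mul, hB.setIntegral_eq hu.1.le hs]
    _ = ∫ ω in s, (∫ u in t..T, w u * B u ω) ∂μ := by
        rw [integral_integral_swap hprod]
        simp_rw [intervalIntegral.integral_of_le htT]

theorem Martingale.integrable_dampedIntegral (hB : Martingale B ℱ μ)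
    (hB_cont : ∀ ω, Continuous (B · ω)) (K : ℝ) {t T : ℝ} (htT : t ≤ T) :
    Integrable (fun ω => dampedIntegral K t T (B · ω)) μ :=
  ((hB.integrable T).sub ((hB.integrable t).const_mul _)).sub
    ((hB.integrable_intervalIntegral_mul hB_cont (by fun_prop) htT).const_mul K)

theorem Martingale.condExp_dampedIntegral (hB : Martingale B ℱ μ)
    (hB_cont : ∀ ω, Continuous (B · ω)) (K : ℝ) {t T : ℝ} (htT : t ≤ T) :
    μ[fun ω => dampedIntegral K t T (B · ω) | ℱ t] =ᵐ[μ] 0 := by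
  have hw : Continuous fun u => exp (-K * (T - u)) := by fun_prop
  obtain ⟨I, hI_def⟩ : ∃ I : Ω → ℝ, I = fun ω => ∫ u in t..T, exp (-K * (T - u)) * B u ω :=
    ⟨_, rfl⟩
  have hI : Integrable I μ := hI_def ▸ hB.integrable_intervalIntegral_mul hB_cont hw htT
  have hcondI := hI_def ▸ hB.condExp_intervalIntegral_mul hB_cont hw htT
  have hBt : μ[B t | ℱ t] = B t :=
    condExp_of_stronglyMeasurable (ℱ.le t) (hB.stronglyAdapted t) (hB.integrable t)
  set e := exp (-K * (T - t))
  have hfun : (fun ω => dampedIntegral K t T (B · ω)) = B T - e • B t - K • I := by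
    rw [hI_def]
    rfl
  rw [hfun]
  filter_upwards [condExp_sub ((hB.integrable T).sub ((hB.integrable t).smul e)) (hI.smul K) (ℱ t),
    condExp_sub (hB.integrable T) ((hB.integrable t).smul e) (ℱ t), condExp_smul e (B t) (ℱ t),
    condExp_smul K I (ℱ t), hB.condExp_ae_eq htT, hcondI] with ω h₁ h₂ h₃ h₄ h₅ h₆
  simp only [h₁, Pi.sub_apply, h₂, h₃, h₄, h₅, Pi.smul_apply, h₆, hBt, smul_eq_mul, Pi.zero_apply]
  linear_combination -B t ω * mul_integral_exp_neg_mul_sub K t T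

theorem condExp_eq_exp_mul_add_integral_of_sde {K η : ℝ} {f : ℝ → ℝ}
    (hf : Continuous f) {ζ : ℝ → Ω → ℝ} (hζ_adapted : Adapted ℱ ζ)
    (hζ_int : ∀ t, Integrable (ζ t) μ) (hζ_cont : ∀ ω, Continuous (ζ · ω))
    (hB : Martingale B ℱ μ) (hB_cont : ∀ ω, Continuous (B · ω))
    (hSDE : ∀ t ω, ζ t ω = ζ 0 ω - K * (∫ u in (0 : ℝ)..t, (ζ u ω - f u)) + η * B t ω)
    {t T : ℝ} (htT : t ≤ T) :
    μ[ζ T | ℱ t] =ᵐ[μ]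
      fun ω => exp (-K * (T - t)) * ζ t ω + K * ∫ u in t..T, exp (-K * (T - u)) * f u := by
  have hG_int : Integrable (fun ω =>
      exp (-K * (T - t)) * ζ t ω + K * ∫ u in t..T, exp (-K * (T - u)) * f u) μ :=
    ((hζ_int t).const_mul _).add (integrable_const _)
  have hG_meas : StronglyMeasurable[ℱ t] fun ω =>
      exp (-K * (T - t)) * ζ t ω + K * ∫ u in t..T, exp (-K * (T - u)) * f u :=
    ((hζ_adapted t).stronglyMeasurable.const_mul _).add stronglyMeasurable_const
  have hpath : ζ T = (fun ω => exp (-K * (T - t)) * ζ t ω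
      + K * ∫ u in t..T, exp (-K * (T - u)) * f u) + η • fun ω => dampedIntegral K t T (B · ω) :=
    funext fun ω => eq_exp_mul_add_integral_of_integral_eq (hζ_cont ω) hf (hB_cont ω)
      (hSDE · ω) t T
  rw [hpath]
  filter_upwards [condExp_add hG_int ((hB.integrable_dampedIntegral hB_cont K htT).smul η) (ℱ t),
    condExp_smul η (fun ω => dampedIntegral K t T (B · ω)) (ℱ t),
    hB.condExp_dampedIntegral hB_cont K htT] with ω h₁ h₂ h₃
  rw [h₁, Pi.add_apply, h₂, Pi.smul_apply, h₃,
    condExp_of_stronglyMeasurable (ℱ.le t) hG_meas hG_int, Pi.zero_apply, smul_zero, add_zero]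

end MeasureTheory

-- `η B` is the martingale part `∫ η √ζ dW` of the SDE, which is written in integral form.
theorem seasonal_cir_condexp_general {Ω : Type*} {m0 : MeasurableSpace Ω}
    (μ : Measure Ω) [IsProbabilityMeasure μ] (ℱ : Filtration ℝ m0)
    (K η γ₀ Δ : ℝ) (hK : 0 < K) (hη : 0 < η) (hΔ : 0 < Δ)
    (m : ℕ) (γ δ : ℕ → ℝ) (ξ : ℕ → ℝ)
    (σsq : ℝ → ℝ)
    (hσsq : ∀ t, σsq t = γ₀ + (∑ k ∈ Finset.Icc 1 m, γ k * Real.sin (ξ k * t))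
        + (∑ k ∈ Finset.Icc 1 m, δ k * Real.cos (ξ k * t)))
    (ζ B : ℝ → Ω → ℝ)
    (hζadapted : Adapted ℱ ζ)
    (hζint : ∀ t, Integrable (ζ t) μ)
    (hζcont : ∀ ω, Continuous fun t => ζ t ω)
    (hB : Martingale B ℱ μ)
    (hSDE : ∀ t ω, ζ t ω = ζ 0 ω - K * (∫ u in (0:ℝ)..t, (ζ u ω - σsq u)) + η * B t ω) :
    ∀ t : ℝ, 0 ≤ t →
      μ[ζ (t + Δ) | ℱ t] =ᵐ[μ] fun ω =>
        γ₀ * (1 - Real.exp (-K * Δ)) + Real.exp (-K * Δ) * ζ t ω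
        + (∑ k ∈ Finset.Icc 1 m,
            (γ k * K * ((K * (Real.cos (ξ k * Δ) - Real.exp (-K * Δ)) + ξ k * Real.sin (ξ k * Δ))
                / (K ^ 2 + ξ k ^ 2))
             - δ k * K * ((K * Real.sin (ξ k * Δ) - ξ k * (Real.cos (ξ k * Δ) - Real.exp (-K * Δ)))
                / (K ^ 2 + ξ k ^ 2))) * Real.sin (ξ k * t))
        + (∑ k ∈ Finset.Icc 1 m,
            (γ k * K * ((K * Real.sin (ξ k * Δ) - ξ k * (Real.cos (ξ k * Δ) - Real.exp (-K * Δ)))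
                / (K ^ 2 + ξ k ^ 2))
             + δ k * K * ((K * (Real.cos (ξ k * Δ) - Real.exp (-K * Δ)) + ξ k * Real.sin (ξ k * Δ))
                / (K ^ 2 + ξ k ^ 2))) * Real.cos (ξ k * t)) := by
  intro t _
  have hσ_cont : Continuous σsq := by
    rw [funext hσsq]
    fun_prop
  have hB_cont : ∀ ω, Continuous (B · ω) := by
    intro ω
    have hB_eq : (B · ω) =
        fun s => (ζ s ω - ζ 0 ω + K * ∫ u in (0 : ℝ)..s, (ζ u ω - σsq u)) / η :=
      funext fun s => by rw [hSDE s ω]; field_simp [hη.ne']; ring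
    rw [hB_eq]
    exact (((hζcont ω).sub continuous_const).add (continuous_const.mul
      (intervalIntegral.continuous_primitive (fun a b =>
        ((hζcont ω).sub hσ_cont).intervalIntegrable a b) 0))).div_const η
  filter_upwards [condExp_eq_exp_mul_add_integral_of_sde hσ_cont hζadapted hζint hζcont hB
    hB_cont hSDE (le_add_of_nonneg_right hΔ.le)] with ω h
  rw [h, add_sub_cancel_left]
  simp_rw [hσsq, mul_integral_exp_neg_mul_sub_mul_trigPoly _ hK.ne']
  ring

/-- Conditional expectation of the seasonal CIR volatility process
`dζ_t = −K(ζ_t − σ²(t))dt + η√ζ_t dW_t` with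
`σ²(t) = γ₀ + Σ_{k=1}^m γ_k sin(ξ_k t) + Σ_{k=1}^m δ_k cos(ξ_k t)`:
`E[ζ_{t+Δ}|F_t] = θ₀ + φ₀ ζ_t + Σ_k θ_k sin(ξ_k t) + Σ_k φ_k cos(ξ_k t)` with the
explicit coefficients.  The SDE is encoded in semimartingale form with martingale
part `η·B`, `B` of quadratic variation `∫ζ`. -/
theorem seasonal_cir_condexp {Ω : Type*} {m0 : MeasurableSpace Ω}
    (μ : Measure Ω) [IsProbabilityMeasure μ] (ℱ : Filtration ℝ m0)
    (K η γ₀ Δ : ℝ) (hK : 0 < K) (hη : 0 < η) (hΔ : 0 < Δ)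
    (m : ℕ) (γ δ : ℕ → ℝ) (ξ : ℕ → ℝ)
    (σsq : ℝ → ℝ)
    (hσsq : ∀ t, σsq t = γ₀ + (∑ k ∈ Finset.Icc 1 m, γ k * Real.sin (ξ k * t))
        + (∑ k ∈ Finset.Icc 1 m, δ k * Real.cos (ξ k * t)))
    (hσnn : ∀ t, 0 ≤ σsq t)
    (ζ B : ℝ → Ω → ℝ)
    (hζnn : ∀ t ω, 0 ≤ ζ t ω)
    (hζadapted : Adapted ℱ ζ)
    (hζint : ∀ t, Integrable (ζ t) μ)
    (hζcont : ∀ ω, Continuous fun t => ζ t ω)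
    (hB : Martingale B ℱ μ) (hB0 : ∀ ω, B 0 ω = 0)
    (hQV : Martingale (fun t ω => (B t ω) ^ 2 - ∫ u in (0:ℝ)..t, ζ u ω) ℱ μ)
    (hSDE : ∀ t ω, ζ t ω = ζ 0 ω - K * (∫ u in (0:ℝ)..t, (ζ u ω - σsq u)) + η * B t ω) :
    ∀ t : ℝ, 0 ≤ t →
      μ[ζ (t + Δ) | ℱ t] =ᵐ[μ] fun ω =>
        γ₀ * (1 - Real.exp (-K * Δ)) + Real.exp (-K * Δ) * ζ t ω
        + (∑ k ∈ Finset.Icc 1 m,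
            (γ k * K * ((K * (Real.cos (ξ k * Δ) - Real.exp (-K * Δ)) + ξ k * Real.sin (ξ k * Δ))
                / (K ^ 2 + ξ k ^ 2))
             - δ k * K * ((K * Real.sin (ξ k * Δ) - ξ k * (Real.cos (ξ k * Δ) - Real.exp (-K * Δ)))
                / (K ^ 2 + ξ k ^ 2))) * Real.sin (ξ k * t))
        + (∑ k ∈ Finset.Icc 1 m,
            (γ k * K * ((K * Real.sin (ξ k * Δ) - ξ k * (Real.cos (ξ k * Δ) - Real.exp (-K * Δ)))
                / (K ^ 2 + ξ k ^ 2))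
             + δ k * K * ((K * (Real.cos (ξ k * Δ) - Real.exp (-K * Δ)) + ξ k * Real.sin (ξ k * Δ))
                / (K ^ 2 + ξ k ^ 2))) * Real.cos (ξ k * t)) :=
  seasonal_cir_condexp_general μ ℱ K η γ₀ Δ hK hη hΔ m γ δ ξ σsq hσsq ζ B hζadapted hζint hζcont hB
    hSDE
end
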